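/- arXiv:2212.03379 — 2 statements merged into one kernel-verified Lean document; each statement's English description precedes it below -/
import Mathlib

section
/- For subcomplexes Y, Z of a simplicial complex X, a chain {σ₀ ⊂ ⋯ ⊂ σₙ} ∈ Sd(X) belongs to Sd(Y) −_Δ Sd(Z) if and only if every σᵢ lies in Y − Z. Consequently: (1) Sd(X) −_Δ (Sd(X) −_Δ Sd(Z)) ≤ Sd(Z); (2) Sd(Y) −_Δ Sd(Z) = ∅ implies Sd(Y) ≤ Sd(Z); (3) Sd(X) −_Δ (Sd(Y) ∩ Sd(Z)) ≤ (Sd(X) −_Δ Sd(Y)) ∪ (Sd(X) −_Δ Sd(Z)). -/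
structure SCx (V : Type*) where
  faces : Set (Finset V)
  nonempty_of_mem : ∀ σ ∈ faces, σ ≠ ∅
  down_closed : ∀ σ ∈ faces, ∀ τ, τ ⊆ σ → τ ≠ ∅ → τ ∈ faces

def IsSub {V : Type*} (K : SCx V) (Y : Set (Finset V)) : Prop :=
  Y ⊆ K.faces ∧ ∀ σ ∈ Y, ∀ τ, τ ⊆ σ → τ ≠ ∅ → τ ∈ Y

/-- The vertex set of a set of simplices. -/
def verts {V : Type*} (Y : Set (Finset V)) : Set V := ⋃ σ ∈ Y, (σ : Set V)

/-- Simplicial subtraction: simplices of `Y` whose vertices avoid the vertex set of `Z`. -/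
def sdiffΔ {V : Type*} (Y Z : Set (Finset V)) : Set (Finset V) :=
  {σ ∈ Y | ∀ v ∈ σ, v ∉ verts Z}

/-- The barycentric subdivision of a set of simplices: its simplices are the
nonempty finite chains (under inclusion) of simplices. -/
def SdC {α : Type*} (S : Set (Finset α)) : Set (Finset (Finset α)) :=
  {C | C.Nonempty ∧ (∀ σ ∈ C, ∀ τ ∈ C, σ ⊆ τ ∨ τ ⊆ σ) ∧ ∀ σ ∈ C, σ ∈ S}

lemma singleton_mem_SdC {V : Type*} {S : Set (Finset V)} {σ : Finset V} (h : σ ∈ S) :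
    ({σ} : Finset (Finset V)) ∈ SdC S :=
  ⟨⟨σ, Finset.mem_singleton_self σ⟩, by simp, by simpa⟩

lemma mem_verts_SdC {V : Type*} {S : Set (Finset V)} {σ : Finset V} :
    σ ∈ verts (SdC S) ↔ σ ∈ S := by
  constructor
  · intro h
    simp only [verts, Set.mem_iUnion] at h
    obtain ⟨C, hC, hσ⟩ := h
    exact hC.2.2 σ hσ
  · intro h
    simp only [verts, Set.mem_iUnion]
    exact ⟨{σ}, singleton_mem_SdC h, by simp⟩

/-- After barycentric subdivision, simplicial subtraction behaves like honest set
subtraction: a chain lies in `Sd(Y) −_Δ Sd(Z)` iff all its elements lie in `Y − Z`;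
consequently double complementation, emptiness of subtraction, and the second
De Morgan law behave as for sets. -/
theorem Sd_sdiff_properties {V : Type*} (K : SCx V)
    (Y Z : Set (Finset V)) (hY : IsSub K Y) (hZ : IsSub K Z) :
    (∀ C ∈ SdC K.faces,
      (C ∈ sdiffΔ (SdC Y) (SdC Z) ↔ ∀ σ ∈ C, σ ∈ Y \ Z)) ∧
    sdiffΔ (SdC K.faces) (sdiffΔ (SdC K.faces) (SdC Z)) ⊆ SdC Z ∧
    (sdiffΔ (SdC Y) (SdC Z) = ∅ → SdC Y ⊆ SdC Z) ∧
    sdiffΔ (SdC K.faces) (SdC Y ∩ SdC Z) ⊆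
      sdiffΔ (SdC K.faces) (SdC Y) ∪ sdiffΔ (SdC K.faces) (SdC Z) := by
  refine ⟨?_, ?_, ?_, ?_⟩
  · intro C hC
    constructor
    · rintro ⟨hCY, hav⟩ σ hσ
      exact ⟨hCY.2.2 σ hσ, fun hσZ => hav σ hσ (mem_verts_SdC.mpr hσZ)⟩
    · intro h
      refine ⟨⟨hC.1, hC.2.1, fun σ hσ => (h σ hσ).1⟩, fun σ hσ hv => ?_⟩
      exact (h σ hσ).2 (mem_verts_SdC.mp hv)
  · rintro C ⟨hCX, hav⟩
    refine ⟨hCX.1, hCX.2.1, fun σ hσ => ?_⟩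
    by_contra hσZ
    apply hav σ hσ
    simp only [verts, Set.mem_iUnion]
    refine ⟨{σ}, ⟨singleton_mem_SdC (hCX.2.2 σ hσ), ?_⟩, by simp⟩
    intro τ hτ hv
    simp only [Finset.mem_singleton] at hτ
    subst hτ
    exact hσZ (mem_verts_SdC.mp hv)
  · intro hempty C hCY
    refine ⟨hCY.1, hCY.2.1, fun σ hσ => ?_⟩
    by_contra hσZ
    have : ({σ} : Finset (Finset V)) ∈ sdiffΔ (SdC Y) (SdC Z) := by
      refine ⟨singleton_mem_SdC (hCY.2.2 σ hσ), ?_⟩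
      intro τ hτ hv
      simp only [Finset.mem_singleton] at hτ; subst hτ
      exact hσZ (mem_verts_SdC.mp hv)
    rw [hempty] at this
    exact this
  · rintro C ⟨hCX, hav⟩
    have hnotboth : ∀ σ ∈ C, ¬(σ ∈ Y ∧ σ ∈ Z) := by
      intro σ hσ ⟨h1, h2⟩
      apply hav σ hσ
      simp only [verts, Set.mem_iUnion]
      exact ⟨{σ}, ⟨singleton_mem_SdC h1, singleton_mem_SdC h2⟩, by simp⟩
    by_cases hcase : ∃ σ ∈ C, σ ∈ Y
    · obtain ⟨σ, hσC, hσY⟩ := hcase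
      right
      refine ⟨hCX, fun τ hτ hv => ?_⟩
      have hτZ : τ ∈ Z := mem_verts_SdC.mp hv
      have hτne : τ ≠ ∅ := K.nonempty_of_mem τ (hCX.2.2 τ hτ)
      have hσne : σ ≠ ∅ := K.nonempty_of_mem σ (hCX.2.2 σ hσC)
      rcases hCX.2.1 σ hσC τ hτ with h | h
      · exact hnotboth σ hσC ⟨hσY, hZ.2 τ hτZ σ h hσne⟩
      · exact hnotboth τ hτ ⟨hY.2 σ hσY τ h hτne, hτZ⟩
    · left
      push_neg at hcase
      exact ⟨hCX, fun τ hτ hv => hcase τ hτ (mem_verts_SdC.mp hv)⟩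
end

section
/- Abstract Deligne characterization: Let C₀, …, C_{n+1} = C be categories with functors ι_k: C_k → C_{k+1} and j_k: C_{k+1} → C_k satisfying j_k ∘ ι_k ≅ id, and endofunctors τ_{p(k)} on C_k and C_{k+1} satisfying τ_{p(k+1)} ∘ τ_{p(k)} ≅ τ_{p(k)}, τ_{p(k)} ∘ τ_{p(k)} ≅ τ_{p(k)}, and j_k ∘ τ_{p(k)} ≅ τ_{p(k)} ∘ j_k. Set j^k = j_k ∘ ⋯ ∘ j_n and fix F₀ ∈ C₀ with τ_{p(0)} F₀ ≅ F₀. Then an object A ∈ C satisfies the axioms j⁰A ≅ F₀ and j^{k+1}A ≅ τ_{p(k)} ι_k j^k A for all k ∈ {0,…,n} if and only if A ≅ τ_{p(n)} ι_n ⋯ τ_{p(0)} ι_0 F₀. -/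
open CategoryTheory

universe u v

/-- Abstract Deligne characterization: given a chain of categories `C 0, …, C (n+1)`
with functors `ι k : C k ⥤ C (k+1)`, `j k : C (k+1) ⥤ C k` with `j k ∘ ι k ≅ id`,
truncation endofunctors `T k i : C i ⥤ C i` (playing the role of `τ_{p(k)}`)
satisfying `τ_{p(k+1)} ∘ τ_{p(k)} ≅ τ_{p(k)}`, idempotence, and commutation with the
`j`'s, and `F₀ ∈ C 0` with `τ_{p(0)} F₀ ≅ F₀`: an object `A ∈ C (n+1)`, with
restrictions `Ak k ≅ j^k A` (encoded by `Ak (n+1) = A` and `Ak k ≅ j k (Ak (k+1))`),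
satisfies the Deligne axioms `A|₀ ≅ F₀` and `A|_{k+1} ≅ τ_{p(k)} ι_k (A|_k)` iff
`A ≅ τ_{p(n)} ι_n ⋯ τ_{p(0)} ι_0 F₀` (the Deligne object `P (n+1)`, encoded by
`P 0 = F₀` and `P (k+1) = τ_{p(k)} ι_k (P k)`). -/
theorem abstract_deligne_axioms
    (n : ℕ) (C : ℕ → Type u) [∀ i, Category.{v} (C i)]
    (ι : ∀ k, C k ⥤ C (k + 1)) (j : ∀ k, C (k + 1) ⥤ C k)
    (T : ℕ → ∀ i, C i ⥤ C i) (p : ℕ → ℤ)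
    (hji : ∀ k, Nonempty (ι k ⋙ j k ≅ 𝟭 (C k)))
    (hT1 : ∀ k i, Nonempty (T k i ⋙ T (k + 1) i ≅ T k i))
    (hT2 : ∀ k i, Nonempty (T k i ⋙ T k i ≅ T k i))
    (hTj : ∀ m k, Nonempty (T m (k + 1) ⋙ j k ≅ j k ⋙ T m k))
    (F₀ : C 0) (hF₀ : Nonempty ((T 0 0).obj F₀ ≅ F₀))
    (P : ∀ k, C k) (hP0 : P 0 = F₀)
    (hPsucc : ∀ k, P (k + 1) = (T k (k + 1)).obj ((ι k).obj (P k)))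
    (A : C (n + 1)) (Ak : ∀ k, C k) (hAtop : Ak (n + 1) = A)
    (hAstep : ∀ k ≤ n, Nonempty (Ak k ≅ (j k).obj (Ak (k + 1)))) :
    (Nonempty (Ak 0 ≅ F₀) ∧
      ∀ k ≤ n, Nonempty (Ak (k + 1) ≅ (T k (k + 1)).obj ((ι k).obj (Ak k)))) ↔
    Nonempty (A ≅ P (n + 1)) := by
  have hTP : ∀ k, Nonempty ((T k k).obj (P k) ≅ P k) := by
    intro k
    cases k with
    | zero => rw [hP0]; exact hF₀
    | succ m =>
        rw [hPsucc]
        exact ⟨(hT1 m (m + 1)).some.app ((ι m).obj (P m))⟩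
  have hjP : ∀ k, Nonempty ((j k).obj (P (k + 1)) ≅ P k) := by
    intro k
    rw [hPsucc]
    obtain ⟨e1⟩ := hTj k k
    obtain ⟨e2⟩ := hji k
    obtain ⟨e3⟩ := hTP k
    exact ⟨e1.app ((ι k).obj (P k)) ≪≫ (T k k).mapIso (e2.app (P k)) ≪≫ e3⟩
  constructor
  · rintro ⟨⟨h0⟩, hstep⟩
    have fwd : ∀ k, k ≤ n + 1 → Nonempty (Ak k ≅ P k) := by
      intro k
      induction k with
      | zero => intro _; rw [hP0]; exact ⟨h0⟩
      | succ m ih =>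
          intro hm
          obtain ⟨e⟩ := ih (by omega)
          obtain ⟨f⟩ := hstep m (by omega)
          rw [hPsucc]
          exact ⟨f ≪≫ (T m (m + 1)).mapIso ((ι m).mapIso e)⟩
    obtain ⟨e⟩ := fwd (n + 1) le_rfl
    rw [hAtop] at e
    exact ⟨e⟩
  · rintro ⟨eA⟩
    have bwd : ∀ m k, k + m = n + 1 → Nonempty (Ak k ≅ P k) := by
      intro m
      induction m with
      | zero =>
          intro k hk
          have : k = n + 1 := by omega
          subst this
          rw [hAtop]
          exact ⟨eA⟩
      | succ m ih =>
          intro k hk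
          obtain ⟨e⟩ := ih (k + 1) (by omega)
          obtain ⟨f⟩ := hAstep k (by omega)
          exact ⟨f ≪≫ (j k).mapIso e ≪≫ (hjP k).some⟩
    constructor
    · obtain ⟨e⟩ := bwd (n + 1) 0 (by omega)
      rw [hP0] at e
      exact ⟨e⟩
    · intro k hk
      obtain ⟨e1⟩ := bwd (n - k) (k + 1) (by omega)
      obtain ⟨e2⟩ := bwd (n + 1 - k) k (by omega)
      rw [hPsucc] at e1
      exact ⟨e1 ≪≫ (T k (k + 1)).mapIso ((ι k).mapIso e2.symm)⟩
end
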